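/- arXiv:2003.01072 — 2 statements merged into one kernel-verified Lean document; each statement's English description precedes it below -/
import Mathlib

section
/- Let A be a positive bounded operator on a Banach sequence lattice G with ‖A‖ ≤ 1/2, and let Q = {x ≥ 0 : x ≥ Ax} (coordinatewise). Then every x ∈ G can be written as x = y − z with y, z ∈ Q, ‖y‖ ≤ 4‖x‖ and ‖z‖ ≤ 4‖x‖. -/
set_option maxHeartbeats 1000000

open scoped ZeroAtInfty
open Filter Topology

namespace ConeDecompAux

/-- positive part of an element of `C₀(ℕ, ℝ)` -/
noncomputable def posPart (u : C₀(ℕ, ℝ)) : C₀(ℕ, ℝ) where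
  toFun := fun n => max (u n) 0
  continuous_toFun := continuous_of_discreteTopology
  zero_at_infty' := by
    simpa using (zero_at_infty (u : C₀(ℕ, ℝ))).max
      (tendsto_const_nhds : Tendsto (fun _ : ℕ => (0:ℝ)) (cocompact ℕ) (𝓝 0))

@[simp] lemma posPart_apply (u : C₀(ℕ, ℝ)) (n : ℕ) : posPart u n = max (u n) 0 := rfl

lemma abs_apply_le (u : C₀(ℕ, ℝ)) (n : ℕ) : |u n| ≤ ‖u‖ := by
  rw [← ZeroAtInftyContinuousMap.norm_toBCF_eq_norm]
  simpa [Real.norm_eq_abs] using u.toBCF.norm_coe_le_norm n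

lemma norm_posPart_le (u : C₀(ℕ, ℝ)) : ‖posPart u‖ ≤ ‖u‖ := by
  rw [← ZeroAtInftyContinuousMap.norm_toBCF_eq_norm (f := posPart u)]
  refine (BoundedContinuousFunction.norm_le (norm_nonneg u)).mpr fun n => ?_
  have h := abs_apply_le u n
  have : |max (u n) 0| ≤ |u n| := by
    rcases le_total (u n) 0 with h' | h' <;> simp [max_eq_right, max_eq_left, h', abs_le]
  simpa [Real.norm_eq_abs, BoundedContinuousFunction.norm_coe_le_norm] using this.trans h

/-- evaluation at a point as a continuous linear map -/
noncomputable def evalCLM (n : ℕ) : C₀(ℕ, ℝ) →L[ℝ] ℝ :=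
  LinearMap.mkContinuous
    { toFun := fun f => f n
      map_add' := fun f g => rfl
      map_smul' := fun c f => rfl } 1
    fun f => by simpa [Real.norm_eq_abs] using abs_apply_le f n

@[simp] lemma evalCLM_apply (n : ℕ) (f : C₀(ℕ, ℝ)) : evalCLM n f = f n := rfl

end ConeDecompAux

open ConeDecompAux

/-- Let `A` be a positive bounded operator on the `c₀` sequence space with
`‖A‖ ≤ 1/2` and let `Q = {x ≥ 0 : A x ≤ x}` (coordinatewise). Then every `x`
decomposes as `x = y - z` with `y, z ∈ Q`, `‖y‖ ≤ 4‖x‖` and `‖z‖ ≤ 4‖x‖`. -/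
theorem cone_decomposition
    (A : ZeroAtInftyContinuousMap ℕ ℝ →L[ℝ] ZeroAtInftyContinuousMap ℕ ℝ)
    (hpos : ∀ x : ZeroAtInftyContinuousMap ℕ ℝ, (∀ n, 0 ≤ x n) → ∀ n, 0 ≤ A x n)
    (hA : ‖A‖ ≤ 1 / 2) :
    ∀ x : ZeroAtInftyContinuousMap ℕ ℝ,
      ∃ y z : ZeroAtInftyContinuousMap ℕ ℝ,
        (∀ n, 0 ≤ y n) ∧ (∀ n, A y n ≤ y n) ∧
        (∀ n, 0 ≤ z n) ∧ (∀ n, A z n ≤ z n) ∧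
        x = y - z ∧ ‖y‖ ≤ 4 * ‖x‖ ∧ ‖z‖ ≤ 4 * ‖x‖ := by
  intro x
  have hAlt : ‖A‖ < 1 := lt_of_le_of_lt hA (by norm_num)
  have hSum : Summable (fun k : ℕ => A ^ k) := summable_geometric_of_norm_lt_one
    (K := ZeroAtInftyContinuousMap ℕ ℝ →L[ℝ] ZeroAtInftyContinuousMap ℕ ℝ) hAlt
  set C : _ →L[ℝ] _ := ∑' k : ℕ, A ^ k with hCdef
  have hC : HasSum (fun k : ℕ => A ^ k) C := hSum.hasSum
  have hBC : (1 - A) * C = 1 := mul_neg_geom_series A hAlt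
  have hCB : C * (1 - A) = 1 := geom_series_mul_neg A hAlt
  have happly : ∀ u : C₀(ℕ, ℝ), HasSum (fun k => (A ^ k) u) (C u) := fun u =>
    (ContinuousLinearMap.apply ℝ (C₀(ℕ, ℝ)) u).hasSum hC
  -- powers preserve positivity
  have hpow : ∀ (k : ℕ) (u : C₀(ℕ, ℝ)), (∀ n, 0 ≤ u n) → ∀ n, 0 ≤ (A ^ k) u n := by
    intro k
    induction k with
    | zero => intro u hu n; simpa using hu n
    | succ k ih =>
      intro u hu n
      have h2 : (A ^ (k + 1)) u = (A ^ k) (A u) := by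
        rw [pow_succ]; rfl
      rw [h2]; exact ih (A u) (hpos u hu) n
  -- C preserves positivity
  have hCpos : ∀ u : C₀(ℕ, ℝ), (∀ n, 0 ≤ u n) → ∀ n, 0 ≤ C u n := by
    intro u hu n
    have h1 : HasSum (fun k => (A ^ k) u n) (C u n) := (evalCLM n).hasSum (happly u)
    exact hasSum_le (fun k => hpow k u hu n) hasSum_zero h1
  -- norm bound for powers
  have hpownorm : ∀ (k : ℕ) (u : C₀(ℕ, ℝ)), ‖(A ^ k) u‖ ≤ ‖A‖ ^ k * ‖u‖ := by
    intro k
    induction k with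
    | zero => intro u; simp
    | succ k ih =>
      intro u
      have h2 : (A ^ (k + 1)) u = (A ^ k) (A u) := by rw [pow_succ]; rfl
      rw [h2]
      calc ‖(A ^ k) (A u)‖ ≤ ‖A‖ ^ k * ‖A u‖ := ih (A u)
        _ ≤ ‖A‖ ^ k * (‖A‖ * ‖u‖) := by
            exact mul_le_mul_of_nonneg_left (A.le_opNorm u) (pow_nonneg (norm_nonneg A) k)
        _ = ‖A‖ ^ (k + 1) * ‖u‖ := by ring
  -- norm bound for C
  have hCnorm : ∀ u : C₀(ℕ, ℝ), ‖C u‖ ≤ 2 * ‖u‖ := by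
    intro u
    have hg : HasSum (fun k : ℕ => ‖A‖ ^ k * ‖u‖) ((1 - ‖A‖)⁻¹ * ‖u‖) :=
      (hasSum_geometric_of_lt_one (norm_nonneg A) hAlt).mul_right _
    have hbound := tsum_of_norm_bounded hg (fun k => hpownorm k u)
    have htsum : ∑' k, (A ^ k) u = C u := (happly u).tsum_eq
    rw [htsum] at hbound
    have h0 : (0:ℝ) < 1 - ‖A‖ := by linarith
    have hinv : (1 - ‖A‖)⁻¹ ≤ 2 := by
      rw [inv_eq_one_div, div_le_iff₀ h0]; linarith
    calc ‖C u‖ ≤ (1 - ‖A‖)⁻¹ * ‖u‖ := hbound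
      _ ≤ 2 * ‖u‖ := mul_le_mul_of_nonneg_right hinv (norm_nonneg u)
  -- the decomposition
  set u : C₀(ℕ, ℝ) := x - A x with hudef
  have hunorm : ‖u‖ ≤ (3 / 2) * ‖x‖ := by
    have h1 : ‖u‖ ≤ ‖x‖ + ‖A x‖ := norm_sub_le x (A x)
    have h2 : ‖A x‖ ≤ ‖A‖ * ‖x‖ := A.le_opNorm x
    have h3 : ‖A‖ * ‖x‖ ≤ (1 / 2) * ‖x‖ :=
      mul_le_mul_of_nonneg_right hA (norm_nonneg x)
    linarith
  refine ⟨C (posPart u), C (posPart (-u)), ?_, ?_, ?_, ?_, ?_, ?_, ?_⟩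
  · exact hCpos _ (fun n => le_max_right _ _)
  · -- A y ≤ y : use (1 - A) * C = 1
    intro n
    have h := congrArg (fun T : C₀(ℕ, ℝ) →L[ℝ] C₀(ℕ, ℝ) => T (posPart u)) hBC
    simp only [ContinuousLinearMap.mul_apply, ContinuousLinearMap.sub_apply,
      ContinuousLinearMap.one_apply] at h
    have h' := congrArg (fun f : C₀(ℕ, ℝ) => f n) h
    simp only [ZeroAtInftyContinuousMap.coe_sub, Pi.sub_apply, posPart_apply] at h'
    have := le_max_right (u n) 0
    linarith [le_max_right (u n) (0:ℝ), h'.ge, h'.le]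
  · exact hCpos _ (fun n => le_max_right _ _)
  · intro n
    have h := congrArg (fun T : C₀(ℕ, ℝ) →L[ℝ] C₀(ℕ, ℝ) => T (posPart (-u))) hBC
    simp only [ContinuousLinearMap.mul_apply, ContinuousLinearMap.sub_apply,
      ContinuousLinearMap.one_apply] at h
    have h' := congrArg (fun f : C₀(ℕ, ℝ) => f n) h
    simp only [ZeroAtInftyContinuousMap.coe_sub, Pi.sub_apply, posPart_apply] at h'
    linarith [le_max_right ((-u) n) (0:ℝ), h'.ge, h'.le]
  · -- x = y - z
    have hsplit : posPart u - posPart (-u) = u := by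
      ext n
      simp only [ZeroAtInftyContinuousMap.coe_sub, Pi.sub_apply, posPart_apply,
        ZeroAtInftyContinuousMap.coe_neg, Pi.neg_apply]
      exact max_zero_sub_max_neg_zero_eq_self (u n)
    have : C (posPart u) - C (posPart (-u)) = C u := by
      rw [← map_sub, hsplit]
    rw [this]
    have h := congrArg (fun T : C₀(ℕ, ℝ) →L[ℝ] C₀(ℕ, ℝ) => T x) hCB
    simp only [ContinuousLinearMap.mul_apply, ContinuousLinearMap.sub_apply,
      ContinuousLinearMap.one_apply] at h
    rw [hudef]
    exact h.symm
  · have h1 := hCnorm (posPart u)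
    have h2 := norm_posPart_le u
    nlinarith [norm_nonneg x]
  · have h1 := hCnorm (posPart (-u))
    have h2 := norm_posPart_le (-u)
    rw [norm_neg] at h2
    nlinarith [norm_nonneg x]
end

section
/- Let (f_j) be a sequence in an inner product space that is orthonormal with respect to inner product ⟨·,·⟩₁ and orthogonal with respect to a second inner product ⟨·,·⟩_∞. Then for any vector v and any n, the partial sum P_n v = Σ_{j≤n} ⟨v, f_j⟩₁ f_j satisfies ‖P_n v‖_∞ ≤ ‖v‖_∞, provided v lies in the ∞-completion and v = Σ_j ⟨v,f_j⟩₁ f_j converges in the ∞-norm. -/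
open Filter Topology
open scoped RealInnerProductSpace

private lemma B_cs {V : Type*} [AddCommGroup V] [Module ℝ V]
    (B : V →ₗ[ℝ] V →ₗ[ℝ] ℝ) (hBsymm : ∀ u w, B u w = B w u)
    (hBnonneg : ∀ u, 0 ≤ B u u) (x y : V) :
    (B x y)^2 ≤ B x x * B y y := by
  have h : ∀ t : ℝ, 0 ≤ B y y * (t * t) + (2 * B x y) * t + B x x := by
    intro t
    have h0 := hBnonneg (x + t • y)
    simp only [map_add, map_smul, LinearMap.add_apply, LinearMap.smul_apply,
      smul_eq_mul] at h0
    rw [hBsymm y x] at h0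
    nlinarith [h0]
  have hd := discrim_le_zero h
  simp only [discrim] at hd
  nlinarith

/-- Let `(f j)` be orthonormal for the inner product of `V` and orthogonal for a second
positive semidefinite symmetric bilinear form `B` (`⟪·,·⟫_∞`). If
`v = ∑_j ⟪v, f j⟫₁ • f j` converges in the `B`-seminorm, then the partial sums
`P n v = ∑_{j < n} ⟪v, f j⟫₁ • f j` satisfy `‖P n v‖_∞ ≤ ‖v‖_∞`,
i.e. `B (P n v) (P n v) ≤ B v v`. -/
theorem partial_sum_second_norm_bound
    {V : Type*} [NormedAddCommGroup V] [InnerProductSpace ℝ V]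
    (B : V →ₗ[ℝ] V →ₗ[ℝ] ℝ)
    (hBsymm : ∀ u w, B u w = B w u)
    (hBnonneg : ∀ u, 0 ≤ B u u)
    (f : ℕ → V) (hf : Orthonormal ℝ f)
    (hforth : ∀ i j, i ≠ j → B (f i) (f j) = 0)
    (v : V)
    (hconv : Tendsto
      (fun n => B (v - ∑ j ∈ Finset.range n, ⟪v, f j⟫ • f j)
                  (v - ∑ j ∈ Finset.range n, ⟪v, f j⟫ • f j))
      atTop (𝓝 0)) :
    ∀ n, B (∑ j ∈ Finset.range n, ⟪v, f j⟫ • f j)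
           (∑ j ∈ Finset.range n, ⟪v, f j⟫ • f j) ≤ B v v := by
  set c : ℕ → ℝ := fun j => ⟪v, f j⟫ with hc
  set S : ℕ → V := fun n => ∑ j ∈ Finset.range n, c j • f j with hS
  set q : V → ℝ := fun x => Real.sqrt (B x x) with hq
  have hq_sq : ∀ x, (q x)^2 = B x x := fun x => Real.sq_sqrt (hBnonneg x)
  have hqnn : ∀ x, 0 ≤ q x := fun x => Real.sqrt_nonneg _
  have hqneg : ∀ x, q (-x) = q x := by
    intro x; simp [hq]
  have htri : ∀ x y, q (x + y) ≤ q x + q y := by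
    intro x y
    have h1 : B (x + y) (x + y) ≤ (q x + q y)^2 := by
      have hcs : B x y ≤ q x * q y := by
        have h2 := B_cs B hBsymm hBnonneg x y
        nlinarith [hq_sq x, hq_sq y, hqnn x, hqnn y,
          mul_nonneg (hqnn x) (hqnn y)]
      simp only [map_add, LinearMap.add_apply]
      nlinarith [hq_sq x, hq_sq y, hBsymm x y]
    have h3 := Real.sqrt_le_sqrt h1
    rw [Real.sqrt_sq (by positivity)] at h3
    exact h3
  have hdiag : ∀ n, B (S n) (S n) = ∑ j ∈ Finset.range n, (c j)^2 * B (f j) (f j) := by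
    intro n
    simp only [hS, map_sum, LinearMap.sum_apply, map_smul, LinearMap.smul_apply,
      smul_eq_mul]
    refine Finset.sum_congr rfl fun j hj => ?_
    rw [Finset.sum_eq_single j]
    · ring
    · intro i hi hne
      rw [hforth i j hne]; ring
    · intro h; exact absurd hj h
  have hmono : Monotone fun n => B (S n) (S n) := by
    intro a b hab
    simp only [hdiag]
    apply Finset.sum_le_sum_of_subset_of_nonneg (Finset.range_subset_range.2 hab)
    intro i _ _
    exact mul_nonneg (sq_nonneg _) (hBnonneg _)
  have hqlim : Tendsto (fun n => q (v - S n)) atTop (𝓝 0) := by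
    have h := hconv.sqrt
    rw [Real.sqrt_zero] at h
    exact h
  have hqS : Tendsto (fun n => q (S n)) atTop (𝓝 (q v)) := by
    rw [Metric.tendsto_atTop]
    intro ε hε
    rw [Metric.tendsto_atTop] at hqlim
    obtain ⟨N, hN⟩ := hqlim ε hε
    refine ⟨N, fun n hn => ?_⟩
    have h1 := hN n hn
    rw [Real.dist_eq, sub_zero] at h1
    rw [Real.dist_eq]
    have ht1 : q (S n) ≤ q v + q (v - S n) := by
      have h4 := htri v (S n - v)
      have he : v + (S n - v) = S n := by abel
      rw [he, show S n - v = -(v - S n) by abel, hqneg] at h4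
      exact h4
    have ht2 : q v ≤ q (S n) + q (v - S n) := by
      have h4 := htri (S n) (v - S n)
      have he : S n + (v - S n) = v := by abel
      rw [he] at h4
      exact h4
    rw [abs_sub_lt_iff]
    constructor <;> linarith [le_abs_self (q (v - S n))]
  have heq : ∀ x : V, q x * q x = B x x := fun x => by rw [← sq]; exact hq_sq x
  have hBlim : Tendsto (fun n => B (S n) (S n)) atTop (𝓝 (B v v)) := by
    simpa only [heq] using hqS.mul hqS
  intro n
  have hfin : B (S n) (S n) ≤ B v v := by
    refine ge_of_tendsto hBlim ?_
    filter_upwards [eventually_ge_atTop n] with m hm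
    exact hmono hm
  simpa [hS, hc] using hfin
end
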